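/- arXiv:1902.11164 — 4 statements merged into one kernel-verified Lean document; each statement's English description precedes it below -/
import Mathlib

section
/- If a polynomial P(x) = ((x^2 - c_1)^2 - c_2)^2 - ... - c_k over a unique factorization domain D with 1+1 ≠ 0 splits into a product of linear factors over D, and c_k ≠ 0, then P has at least 2^(k-1) + 1 distinct roots in D. -/
/-!
Peeling off the innermost square, `chain c (k + 1) = g.comp (X ^ 2 - C (c 1))` where `g` is the
chain of `c 2, …, c (k + 1)`. If `g.comp (X ^ 2 - C a)` splits over `D`, so does `g`, and each root
`ρ` of `g` has a square root `s` of `a + ρ` in `D`; then `±s` are roots of `g.comp (X ^ 2 - C a)`,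
distinct unless `ρ = -a` because `2 ≠ 0`. So each layer turns `N` distinct roots into at least
`2 N - 1`, and into `2 N` at the outermost layer `X ^ 2 - c k`, where the only root `0` of `X` is not
`-c k`. Starting from `N = 1` this gives `2, 3, 5, …, 2 ^ (k - 1) + 1`.
-/

open Polynomial

noncomputable def chain {D : Type*} [CommRing D] (c : ℕ → D) : ℕ → Polynomial D
  | 0 => X
  | j + 1 => (chain c j) ^ 2 - C (c (j + 1))

def Crumbles {D : Type*} [CommRing D] (P : Polynomial D) : Prop :=
  ∃ s : Multiset (Polynomial D), (∀ q ∈ s, q.degree = 1) ∧ P = s.prod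

open Finset

theorem chain_succ_eq_comp {D : Type*} [CommRing D] (c : ℕ → D) (k : ℕ) :
    chain c (k + 1) = (chain (fun i => c (i + 1)) k).comp (X ^ 2 - C (c 1)) := by
  induction k with
  | zero => simp [chain]
  | succ k ih => rw [chain, ih, chain, sub_comp, pow_comp, C_comp]

section

variable {D : Type*} [CommRing D] [IsDomain D]

theorem chain_monic (c : ℕ → D) (k : ℕ) : (chain c k).Monic := by
  induction k generalizing c with
  | zero => exact monic_X
  | succ k ih =>
    rw [chain_succ_eq_comp]
    exact (ih _).comp (monic_X_pow_sub_C _ two_ne_zero) (by rw [natDegree_X_pow_sub_C]; norm_num)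

theorem Crumbles.splits {P : D[X]} (hP : Crumbles P) (hm : P.Monic) : P.Splits := by
  obtain ⟨s, hdeg, rfl⟩ := hP
  have hlc : (s.map leadingCoeff).prod = 1 := by
    rw [← leadingCoeff_multiset_prod, hm.leadingCoeff]
  refine Splits.multisetProd fun q hq => ?_
  have hu : IsUnit q.leadingCoeff :=
    isUnit_of_dvd_one (hlc ▸ Multiset.dvd_prod (Multiset.mem_map_of_mem _ hq))
  exact Splits.of_degree_le_one_of_invertible (hdeg q hq).le hu.invertible

theorem comp_X_sq_sub_C_ne_zero {g : D[X]} (hg : g ≠ 0) (a : D) : g.comp (X ^ 2 - C a) ≠ 0 := by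
  intro h
  rcases comp_eq_zero_iff.mp h with h | ⟨-, h⟩
  · exact hg h
  · simpa using congrArg natDegree h

/-- Every root `ρ` of `g` in an algebraic closure is `σ ^ 2 - a` for a root `σ` of
`g.comp (X ^ 2 - C a)`, and those roots lie in `D`. -/
theorem Polynomial.Splits.of_splits_comp_X_sq_sub_C {g : D[X]} {a : D} (hg : g ≠ 0)
    (h : (g.comp (X ^ 2 - C a)).Splits) : g.Splits := by
  let i := (algebraMap (FractionRing D) (AlgebraicClosure (FractionRing D))).comp
    (algebraMap D (FractionRing D))
  have hi : Function.Injective i := (RingHom.injective (algebraMap (FractionRing D) _)).comp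
    (IsFractionRing.injective D (FractionRing D))
  refine Splits.of_splits_map_of_injective hi (IsAlgClosed.splits _) fun ρ hρ => ?_
  obtain ⟨σ, hσ⟩ := IsAlgClosed.exists_pow_nat_eq (i a + ρ) two_pos
  have hσ_root : σ ∈ ((g.comp (X ^ 2 - C a)).map i).roots := by
    rw [mem_roots (Polynomial.map_ne_zero_iff hi |>.mpr (comp_X_sq_sub_C_ne_zero hg a))]
    simpa [IsRoot, map_comp, eval_comp, hσ] using (mem_roots'.mp hρ).2
  rw [h.roots_map_of_injective hi, Multiset.mem_map] at hσ_root
  obtain ⟨s, -, rfl⟩ := hσ_root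
  exact ⟨s ^ 2 - a, by simp [hσ]⟩

theorem exists_sq_eq_add_of_splits_comp {g : D[X]} {a ρ : D} (hg : g ≠ 0)
    (h : (g.comp (X ^ 2 - C a)).Splits) (hρ : g.IsRoot ρ) : ∃ s, s ^ 2 = a + ρ := by
  have hdvd : X ^ 2 - C (a + ρ) ∣ g.comp (X ^ 2 - C a) := by
    obtain ⟨f, hf⟩ := dvd_iff_isRoot.mpr hρ
    exact ⟨f.comp (X ^ 2 - C a), by rw [hf, mul_comp, sub_comp, X_comp, C_comp, C_add]; ring⟩
  obtain ⟨s, hs⟩ := (h.of_dvd (comp_X_sq_sub_C_ne_zero hg a) hdvd).exists_eval_eq_zero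
    (by rw [degree_X_pow_sub_C two_pos]; norm_num)
  exact ⟨s, by simpa [sub_eq_zero] using hs⟩

variable [DecidableEq D]

theorem two_le_card_fiber_comp_X_sq_sub_C {g : D[X]} {a ρ : D} (htwo : (2 : D) ≠ 0) (hg : g ≠ 0)
    (h : (g.comp (X ^ 2 - C a)).Splits) (hρ : g.IsRoot ρ) :
    2 ≤ #{x ∈ (g.comp (X ^ 2 - C a)).roots.toFinset | x ^ 2 - a = ρ} +
      if ρ = -a then 1 else 0 := by
  obtain ⟨s, hs⟩ := exists_sq_eq_add_of_splits_comp hg h hρ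
  have hmem : ∀ x, x ^ 2 = a + ρ →
      x ∈ {x ∈ (g.comp (X ^ 2 - C a)).roots.toFinset | x ^ 2 - a = ρ} := by
    intro x hx
    have hxρ : x ^ 2 - a = ρ := by rw [hx]; ring
    simp [comp_X_sq_sub_C_ne_zero hg a, eval_comp, hxρ, hρ.eq_zero]
  split_ifs with hρa
  · exact Nat.succ_le_succ (card_pos.mpr ⟨s, hmem s hs⟩)
  · have hs_ne : s ≠ -s := by
      intro hss
      have h2s : (2 : D) * s = 0 := by linear_combination hss
      have hs0 : s = 0 := (mul_eq_zero.mp h2s).resolve_left htwo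
      exact hρa (by linear_combination -hs + s * hs0)
    calc 2 = #{s, -s} := (card_pair hs_ne).symm
      _ ≤ _ := card_le_card (by
          intro x hx
          rcases mem_insert.mp hx with rfl | hx
          · exact hmem _ hs
          · rw [mem_singleton.mp hx]; exact hmem _ (by rw [neg_sq, hs]))
      _ = _ := (add_zero _).symm

theorem two_mul_card_roots_toFinset_le {g : D[X]} {a : D} (htwo : (2 : D) ≠ 0) (hg : g ≠ 0)
    (h : (g.comp (X ^ 2 - C a)).Splits) :
    2 * #g.roots.toFinset ≤
      #(g.comp (X ^ 2 - C a)).roots.toFinset + if -a ∈ g.roots.toFinset then 1 else 0 := by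
  have hmaps : ∀ x ∈ (g.comp (X ^ 2 - C a)).roots.toFinset, x ^ 2 - a ∈ g.roots.toFinset := by
    intro x hx
    simpa [comp_X_sq_sub_C_ne_zero hg a, hg, eval_comp] using hx
  rw [card_eq_sum_card_fiberwise hmaps, ← sum_ite_eq' g.roots.toFinset (-a) (fun _ => 1),
    ← sum_add_distrib, mul_comm, ← smul_eq_mul, ← sum_const]
  refine sum_le_sum fun ρ hρ => two_le_card_fiber_comp_X_sq_sub_C htwo hg h ?_
  simpa [hg] using hρ

theorem pow_add_one_le_card_roots_toFinset_chain (htwo : (2 : D) ≠ 0) (k : ℕ) (c : ℕ → D)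
    (hcr : (chain c (k + 1)).Splits) (hc : c (k + 1) ≠ 0) :
    2 ^ k + 1 ≤ #(chain c (k + 1)).roots.toFinset := by
  induction k generalizing c with
  | zero =>
    rw [chain_succ_eq_comp] at hcr ⊢
    have := two_mul_card_roots_toFinset_le htwo (chain_monic _ 0).ne_zero hcr
    simp only [chain, X_comp, roots_X, Multiset.toFinset_singleton, card_singleton,
      mem_singleton, neg_eq_zero, hc, if_false, add_zero] at this ⊢
    omega
  | succ k ih =>
    rw [chain_succ_eq_comp] at hcr ⊢
    have hg := (chain_monic (fun i => c (i + 1)) (k + 1)).ne_zero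
    have hlift := two_mul_card_roots_toFinset_le htwo hg hcr
    have hbase := ih _ (hcr.of_splits_comp_X_sq_sub_C hg) hc
    have hdefect : (if -c 1 ∈ (chain (fun i => c (i + 1)) (k + 1)).roots.toFinset then 1 else 0)
        ≤ 1 :=
      ite_le_one le_rfl zero_le_one
    rw [pow_succ]
    omega

end

theorem stmt_0_general {D : Type*} [CommRing D] [IsDomain D]
    (htwo : (2 : D) ≠ 0) (k : ℕ) (hk : 1 ≤ k) (c : ℕ → D)
    (hcr : Crumbles (chain c k)) (hck : c k ≠ 0) :
    ∃ S : Finset D, 2 ^ (k - 1) + 1 ≤ S.card ∧ ∀ r ∈ S, (chain c k).eval r = 0 := by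
  classical
  obtain ⟨k, rfl⟩ := Nat.exists_eq_add_of_le' hk
  have hm := chain_monic c (k + 1)
  refine ⟨(chain c (k + 1)).roots.toFinset,
    pow_add_one_le_card_roots_toFinset_chain htwo k c (hcr.splits hm) hck, fun r hr => ?_⟩
  exact (mem_roots hm.ne_zero).mp (Multiset.mem_toFinset.mp hr)

theorem stmt_0 {D : Type*} [CommRing D] [IsDomain D] [UniqueFactorizationMonoid D]
    (htwo : (2 : D) ≠ 0) (k : ℕ) (hk : 1 ≤ k) (c : ℕ → D)
    (hcr : Crumbles (chain c k)) (hck : c k ≠ 0) :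
    ∃ S : Finset D, 2 ^ (k - 1) + 1 ≤ S.card ∧ ∀ r ∈ S, (chain c k).eval r = 0 :=
  stmt_0_general htwo k hk c hcr hck
end

section
/- For all real x with x ≥ 11, the natural logarithm of the primorial of x exceeds x/2, i.e. ln(∏_{p prime, p ≤ x} p) > x/2. -/
set_option maxHeartbeats 2000000
set_option maxRecDepth 1000000


open Finset in
lemma lemA (n : ℕ) (hn : 1 ≤ n) :
    Nat.centralBinom n ≤ primorial (2*n) * (2*n)^(Nat.sqrt (2*n)) := by
  have h2n : 0 < 2*n := by omega
  conv_lhs => rw [← Nat.prod_pow_factorization_centralBinom n]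
  have key : ∀ p ∈ range (2*n+1),
      p ^ (Nat.centralBinom n).factorization p ≤
      (if p.Prime then p else 1) * (if p.Prime ∧ p*p ≤ 2*n then 2*n else 1) := by
    intro p _
    by_cases hp : p.Prime
    · simp only [hp, if_true, true_and]
      set e := (Nat.centralBinom n).factorization p with he
      have hpe : p ^ e ≤ 2*n := by
        rw [he, Nat.centralBinom]
        exact Nat.pow_factorization_choose_le h2n
      rcases Nat.lt_or_ge e 2 with h1 | h2
      · interval_cases e
        · have h1p : 1 ≤ p := hp.one_lt.le.trans' (by omega)
          simp only [pow_zero]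
          split <;> nlinarith
        · simp only [pow_one]
          split
          · exact Nat.le_mul_of_pos_right p h2n
          · omega
      · have hpp : p*p ≤ 2*n := by
          calc p*p = p^2 := (sq p).symm
            _ ≤ p^e := Nat.pow_le_pow_right hp.one_lt.le h2
            _ ≤ 2*n := hpe
        rw [if_pos hpp]
        calc p ^ e ≤ 2*n := hpe
          _ ≤ p * (2*n) := Nat.le_mul_of_pos_left _ hp.pos
    · have : (Nat.centralBinom n).factorization p = 0 :=
        Nat.factorization_eq_zero_of_not_prime _ hp
      simp [this, hp]
  calc (∏ p ∈ range (2*n+1), p ^ (Nat.centralBinom n).factorization p)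
      ≤ ∏ p ∈ range (2*n+1),
          ((if p.Prime then p else 1) * (if p.Prime ∧ p*p ≤ 2*n then 2*n else 1)) :=
        Finset.prod_le_prod' key
    _ = (∏ p ∈ range (2*n+1), if p.Prime then p else 1) *
        (∏ p ∈ range (2*n+1), if p.Prime ∧ p*p ≤ 2*n then 2*n else 1) :=
        Finset.prod_mul_distrib
    _ ≤ primorial (2*n) * (2*n)^(Nat.sqrt (2*n)) := by
        apply Nat.mul_le_mul
        · rw [primorial, ← Finset.prod_filter]
        · rw [← Finset.prod_filter, Finset.prod_const]
          apply Nat.pow_le_pow_right h2n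
          calc (Finset.filter (fun p => p.Prime ∧ p*p ≤ 2*n) (range (2*n+1))).card
              ≤ (Finset.Icc 2 (Nat.sqrt (2*n))).card := by
                apply Finset.card_le_card
                intro p hp
                simp only [Finset.mem_filter] at hp
                simp only [Finset.mem_Icc]
                exact ⟨hp.2.1.two_le, Nat.le_sqrt'.mpr (by nlinarith [hp.2.2])⟩
            _ ≤ Nat.sqrt (2*n) := by rw [Nat.card_Icc]; omega

lemma theta_big (n : ℕ) (hn : 4232 ≤ n) :
    (n:ℝ) + 1 ≤ Real.log (primorial (2*n)) := by
  have hn4 : 4 ≤ n := by omega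
  have h2n : 0 < 2*n := by omega
  set s := Nat.sqrt (2*n) with hs
  have hnat : 4^n ≤ n * (primorial (2*n) * (2*n)^s) :=
    le_trans (Nat.four_pow_lt_mul_centralBinom n hn4).le
      (Nat.mul_le_mul_left n (lemA n (by omega)))
  -- cast to ℝ
  have hreal : (4:ℝ)^n ≤ (n:ℝ) * ((primorial (2*n) : ℝ) * (2*n:ℕ)^s) := by
    exact_mod_cast hnat
  have hppos : (0:ℝ) < (primorial (2*n) : ℝ) := by
    exact_mod_cast primorial_pos (2*n)
  have hnpos : (0:ℝ) < (n:ℝ) := by positivity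
  have h2npos : (0:ℝ) < ((2*n : ℕ):ℝ) := by exact_mod_cast h2n
  -- take logs
  have hlog : (n:ℝ) * Real.log 4 ≤
      Real.log n + Real.log (primorial (2*n)) + s * Real.log (2*n:ℕ) := by
    have h1 : Real.log ((4:ℝ)^n) ≤
        Real.log ((n:ℝ) * ((primorial (2*n) : ℝ) * ((2*n:ℕ):ℝ)^s)) :=
      Real.log_le_log (by positivity) hreal
    rw [Real.log_pow, Real.log_mul (by positivity) (by positivity),
      Real.log_mul (by positivity) (by positivity), Real.log_pow] at h1
    linarith
  have hc : ((2*n:ℕ):ℝ) = 2*(n:ℝ) := by push_cast; ring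
  rw [hc] at hlog
  -- bounds in terms of w
  have hs92 : 92 ≤ s := by
    rw [hs]
    have : 92*92 ≤ 2*n := by omega
    exact Nat.le_sqrt'.mpr this
  have hS2n : s^2 ≤ 2*n := Nat.sqrt_le' (2*n)
  have hS2n' : 2*n ≤ (s+1)^2 := le_of_lt (Nat.lt_succ_sqrt' (2*n))
  have hS2 : ((s:ℝ))^2 ≤ 2*(n:ℝ) := by exact_mod_cast hS2n
  have hS2' : 2*(n:ℝ) ≤ ((s:ℝ)+1)^2 := by exact_mod_cast hS2n'
  set w := Real.sqrt (Real.sqrt ((s:ℝ)+1)) with hw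
  have hsp : (0:ℝ) ≤ (s:ℝ)+1 := by positivity
  have hw4 : w^4 = (s:ℝ)+1 := by
    rw [hw, show (4:ℕ) = 2*2 from rfl, pow_mul, Real.sq_sqrt (Real.sqrt_nonneg _),
      Real.sq_sqrt hsp]
  have hw0 : 0 < w := by
    rw [hw]
    apply Real.sqrt_pos.mpr
    apply Real.sqrt_pos.mpr
    positivity
  have hs92R : (92:ℝ) ≤ (s:ℝ) := by exact_mod_cast hs92
  have hw31 : 3.1 ≤ w := by
    by_contra hcon
    push_neg at hcon
    have h4' : w^4 < (3.1:ℝ)^4 := by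
      apply pow_lt_pow_left₀ hcon hw0.le
      norm_num
    rw [hw4] at h4'
    norm_num at h4'
    linarith
  have hlogw : Real.log w ≤ w - 1 := Real.log_le_sub_one_of_pos hw0
  have h2npos' : (0:ℝ) < 2*(n:ℝ) := by positivity
  have hlog2n : Real.log (2*(n:ℝ)) ≤ 8*(w-1) := by
    have h1 : Real.log (2*(n:ℝ)) ≤ Real.log (w^(4*2)) := by
      apply Real.log_le_log h2npos'
      rw [pow_mul, hw4]
      nlinarith [hS2']
    rw [Real.log_pow] at h1
    push_cast at h1
    linarith
  have hlog2npos : 0 ≤ Real.log (2*(n:ℝ)) := by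
    apply Real.log_nonneg
    have : (1:ℝ) ≤ (n:ℝ) := by exact_mod_cast hn4.trans' (by norm_num)
    linarith
  have hlogn : Real.log (n:ℝ) ≤ Real.log (2*(n:ℝ)) := by
    apply Real.log_le_log hnpos
    linarith
  have hlog4 : (1.386:ℝ) ≤ Real.log 4 := by
    have h2 : Real.log 4 = 2 * Real.log 2 := by
      rw [show (4:ℝ) = 2^2 by norm_num, Real.log_pow]; push_cast; ring
    have := Real.log_two_gt_d9
    linarith
  have hSw : (s:ℝ) = w^4 - 1 := by linarith [hw4]
  have hwpos4 : (0:ℝ) ≤ w^4 - 1 := by nlinarith [hw31]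
  -- s * log(2n) ≤ (w^4-1)*8*(w-1)
  have hterm : (s:ℝ) * Real.log (2*(n:ℝ)) ≤ (w^4-1)*(8*(w-1)) := by
    rw [hSw]
    apply mul_le_mul_of_nonneg_left hlog2n hwpos4
  have hn_ge : ((w^4-1)^2/2) ≤ (n:ℝ) := by
    rw [← hSw]; nlinarith [hS2]
  have hq : ((w^4-1)^2/2)*0.386 ≤ (n:ℝ) * (Real.log 4 - 1) := by
    calc ((w^4-1)^2/2)*0.386 ≤ (n:ℝ)*0.386 :=
          mul_le_mul_of_nonneg_right hn_ge (by norm_num)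
      _ ≤ (n:ℝ) * (Real.log 4 - 1) :=
          mul_le_mul_of_nonneg_left (by linarith) hnpos.le
  have hpoly : 1 + 8*(w-1) + (w^4-1)*(8*(w-1)) ≤ ((w^4-1)^2/2)*0.386 := by
    nlinarith [sq_nonneg (w-3.1), sq_nonneg w, pow_le_pow_left₀ (by norm_num : (0:ℝ) ≤ 3.1) hw31 4,
      sq_nonneg (w^2 - 9), sq_nonneg (w^3 - 28), sq_nonneg (w^4 - 92),
      mul_nonneg (sub_nonneg.mpr hw31) (sq_nonneg (w^2-9)),
      mul_nonneg (mul_nonneg (sub_nonneg.mpr hw31) (sub_nonneg.mpr hw31)) (sq_nonneg (w^2-9))]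
  linarith [hlog, hterm, hlogn, hlog2n, hq, hpoly]


lemma primorial_step (a b : ℕ) (L : List ℕ) (hab : a ≤ b)
    (h1 : ∀ p ∈ L, Nat.Prime p) (h2 : ∀ p ∈ L, a < p ∧ p ≤ b) (h3 : L.Nodup) :
    primorial a * L.prod ≤ primorial b := by
  have hLf : L.prod = ∏ p ∈ L.toFinset, p := by
    rw [List.prod_toFinset _ h3]; simp
  set S := Finset.filter Nat.Prime (Finset.range (a+1)) with hS
  have hdisj : Disjoint S L.toFinset := by
    rw [Finset.disjoint_left]
    intro p hpS hpL
    have h1' := (Finset.mem_filter.mp hpS).1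
    rw [Finset.mem_range] at h1'
    have h2' := (h2 p (List.mem_toFinset.mp hpL)).1
    omega
  have hunion : S ∪ L.toFinset ⊆ Finset.filter Nat.Prime (Finset.range (b+1)) := by
    intro p hp
    rcases Finset.mem_union.mp hp with h | h
    · simp only [hS, Finset.mem_filter, Finset.mem_range] at h ⊢
      exact ⟨by omega, h.2⟩
    · have hpl := List.mem_toFinset.mp h
      simp only [Finset.mem_filter, Finset.mem_range]
      exact ⟨by have := (h2 p hpl).2; omega, h1 p hpl⟩
  calc primorial a * L.prod = ∏ p ∈ S ∪ L.toFinset, p := by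
        rw [hLf, primorial, ← Finset.prod_union hdisj]
    _ ≤ ∏ p ∈ Finset.filter Nat.Prime (Finset.range (b+1)), p :=
        Finset.prod_le_prod_of_subset_of_one_le' hunion
          (fun i hi _ => (Finset.mem_filter.mp hi).2.one_lt.le)
    _ = primorial b := rfl

lemma cpcover (a K b m : ℕ) (hk : 2^K ≤ primorial a) (h1 : a ≤ m) (h2 : m < b)
    (h3 : (b:ℝ) ≤ 2*(K:ℝ)*0.6931471803) :
    ((m:ℝ)+1)/2 ≤ Real.log (primorial m) := by
  have hmono : (2:ℕ)^K ≤ primorial m := hk.trans (primorial_mono h1)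
  have hR : (2:ℝ)^K ≤ (primorial m : ℝ) := by exact_mod_cast hmono
  have hlog : (K:ℝ) * Real.log 2 ≤ Real.log (primorial m) := by
    have := Real.log_le_log (by positivity) hR
    rwa [Real.log_pow] at this
  have hl2 : (0.6931471803:ℝ) ≤ Real.log 2 := Real.log_two_gt_d9.le
  have hK0 : (0:ℝ) ≤ (K:ℝ) := by positivity
  have hmb : (m:ℝ) + 1 ≤ (b:ℝ) := by exact_mod_cast h2
  nlinarith [mul_le_mul_of_nonneg_left hl2 hK0]

def L0 : List ℕ := [13]

def L1 : List ℕ := [17, 19]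

def L2 : List ℕ := [23, 29]

def L3 : List ℕ := [31, 37, 41]

def L4 : List ℕ := [43, 47, 53, 59, 61]

def L5 : List ℕ := [67, 71, 73, 79, 83, 89, 97, 101]

def L6 : List ℕ := [103, 107, 109, 113, 127, 131, 137, 139, 149, 151, 157, 163, 167]

def L7 : List ℕ := [173, 179, 181, 191, 193, 197, 199, 211, 223, 227, 229, 233, 239, 241, 251, 257, 263, 269, 271, 277, 281, 283, 293]

def L8 : List ℕ := [307, 311, 313, 317, 331, 337, 347, 349, 353, 359, 367, 373, 379, 383, 389, 397, 401, 409, 419, 421, 431, 433, 439, 443, 449, 457, 461, 463, 467, 479, 487, 491, 499, 503, 509, 521, 523, 541, 547]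

def L9 : List ℕ := [557, 563, 569, 571, 577, 587, 593, 599, 601, 607, 613, 617, 619, 631, 641, 643, 647, 653, 659, 661, 673, 677, 683, 691, 701, 709, 719, 727, 733, 739, 743, 751, 757, 761, 769, 773, 787, 797, 809, 811, 821, 823, 827, 829, 839, 853, 857, 859, 863, 877, 881, 883, 887, 907, 911, 919, 929, 937, 941, 947, 953, 967, 971, 977, 983, 991, 997, 1009, 1013]

def L10 : List ℕ := [1019, 1021, 1031, 1033, 1039, 1049, 1051, 1061, 1063, 1069, 1087, 1091, 1093, 1097, 1103, 1109, 1117, 1123, 1129, 1151, 1153, 1163, 1171, 1181, 1187, 1193, 1201, 1213, 1217, 1223, 1229, 1231, 1237, 1249, 1259, 1277, 1279, 1283, 1289, 1291, 1297, 1301, 1303, 1307, 1319, 1321, 1327, 1361, 1367, 1373, 1381, 1399, 1409, 1423, 1427, 1429, 1433, 1439, 1447, 1451, 1453, 1459, 1471, 1481, 1483, 1487, 1489, 1493, 1499, 1511, 1523, 1531, 1543, 1549, 1553, 1559, 1567, 1571, 1579, 1583, 1597, 1601, 1607, 1609, 1613, 1619, 1621, 1627, 1637, 1657, 1663, 1667,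 1669, 1693, 1697, 1699, 1709, 1721, 1723, 1733, 1741, 1747, 1753, 1759, 1777, 1783, 1787, 1789, 1801, 1811, 1823, 1831, 1847, 1861, 1867, 1871, 1873, 1877, 1879, 1889]

def L11 : List ℕ := [1901, 1907, 1913, 1931, 1933, 1949, 1951, 1973, 1979, 1987, 1993, 1997, 1999, 2003, 2011, 2017, 2027, 2029, 2039, 2053, 2063, 2069, 2081, 2083, 2087, 2089, 2099, 2111, 2113, 2129, 2131, 2137, 2141, 2143, 2153, 2161, 2179, 2203, 2207, 2213, 2221, 2237, 2239, 2243, 2251, 2267, 2269, 2273, 2281, 2287, 2293, 2297, 2309, 2311, 2333, 2339, 2341, 2347, 2351, 2357, 2371, 2377, 2381, 2383, 2389, 2393, 2399, 2411, 2417, 2423, 2437, 2441, 2447, 2459, 2467, 2473, 2477, 2503, 2521, 2531, 2539, 2543, 2549, 2551, 2557, 2579, 2591, 2593, 2609, 2617, 2621, 2633, 2647, 2657, 2659, 2663, 2671, 2677, 2683, 2687, 2689, 2693, 2699, 2707, 2711, 2713, 2719, 2729, 2731, 2741, 2749, 2753, 2767, 2777, 2789, 2791, 2797, 2801, 2803,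 2819]

def L12 : List ℕ := [2833, 2837, 2843, 2851, 2857, 2861, 2879, 2887, 2897, 2903, 2909, 2917, 2927, 2939, 2953, 2957, 2963, 2969, 2971, 2999, 3001, 3011, 3019, 3023, 3037, 3041, 3049, 3061, 3067, 3079, 3083, 3089, 3109, 3119, 3121, 3137, 3163, 3167, 3169, 3181, 3187, 3191, 3203, 3209, 3217, 3221, 3229, 3251, 3253, 3257, 3259, 3271, 3299, 3301, 3307, 3313, 3319, 3323, 3329, 3331, 3343, 3347, 3359, 3361, 3371, 3373, 3389, 3391, 3407, 3413, 3433, 3449, 3457, 3461, 3463, 3467, 3469, 3491, 3499, 3511, 3517, 3527, 3529, 3533, 3539, 3541, 3547, 3557, 3559, 3571, 3581, 3583, 3593, 3607, 3613, 3617, 3623, 3631, 3637, 3643, 3659, 3671, 3673, 3677, 3691, 3697, 3701, 3709, 3719, 3727, 3733, 3739, 3761, 3767, 3769, 3779, 3793, 3797, 3803, 3821]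

def L13 : List ℕ := [3823, 3833, 3847, 3851, 3853, 3863, 3877, 3881, 3889, 3907, 3911, 3917, 3919, 3923, 3929, 3931, 3943, 3947, 3967, 3989, 4001, 4003, 4007, 4013, 4019, 4021, 4027, 4049, 4051, 4057, 4073, 4079, 4091, 4093, 4099, 4111, 4127, 4129, 4133, 4139, 4153, 4157, 4159, 4177, 4201, 4211, 4217, 4219, 4229, 4231, 4241, 4243, 4253, 4259, 4261, 4271, 4273, 4283, 4289, 4297, 4327, 4337, 4339, 4349, 4357, 4363, 4373, 4391, 4397, 4409, 4421, 4423, 4441, 4447, 4451, 4457, 4463, 4481, 4483, 4493, 4507, 4513, 4517, 4519, 4523, 4547, 4549, 4561, 4567, 4583, 4591, 4597, 4603, 4621, 4637, 4639, 4643, 4649, 4651, 4657, 4663, 4673, 4679, 4691, 4703, 4721, 4723, 4729, 4733, 4751, 4759, 4783, 4787, 4789, 4793, 4799, 4801, 4813, 4817, 4831]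

def L14 : List ℕ := [4861, 4871, 4877, 4889, 4903, 4909, 4919, 4931, 4933, 4937, 4943, 4951, 4957, 4967, 4969, 4973, 4987, 4993, 4999, 5003, 5009, 5011, 5021, 5023, 5039, 5051, 5059, 5077, 5081, 5087, 5099, 5101, 5107, 5113, 5119, 5147, 5153, 5167, 5171, 5179, 5189, 5197, 5209, 5227, 5231, 5233, 5237, 5261, 5273, 5279, 5281, 5297, 5303, 5309, 5323, 5333, 5347, 5351, 5381, 5387, 5393, 5399, 5407, 5413, 5417, 5419, 5431, 5437, 5441, 5443, 5449, 5471, 5477, 5479, 5483, 5501, 5503, 5507, 5519, 5521, 5527, 5531, 5557, 5563, 5569, 5573, 5581, 5591, 5623, 5639, 5641, 5647, 5651, 5653, 5657, 5659, 5669, 5683, 5689, 5693, 5701, 5711, 5717, 5737, 5741, 5743, 5749, 5779, 5783, 5791, 5801, 5807, 5813, 5821, 5827, 5839, 5843, 5849, 5851, 5857]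

def L15 : List ℕ := [5861, 5867, 5869, 5879, 5881, 5897, 5903, 5923, 5927, 5939, 5953, 5981, 5987, 6007, 6011, 6029, 6037, 6043, 6047, 6053, 6067, 6073, 6079, 6089, 6091, 6101, 6113, 6121, 6131, 6133, 6143, 6151, 6163, 6173, 6197, 6199, 6203, 6211, 6217, 6221, 6229, 6247, 6257, 6263, 6269, 6271, 6277, 6287, 6299, 6301, 6311, 6317, 6323, 6329, 6337, 6343, 6353, 6359, 6361, 6367, 6373, 6379, 6389, 6397, 6421, 6427, 6449, 6451, 6469, 6473, 6481, 6491, 6521, 6529, 6547, 6551, 6553, 6563, 6569, 6571, 6577, 6581, 6599, 6607, 6619, 6637, 6653, 6659, 6661, 6673, 6679, 6689, 6691, 6701, 6703, 6709, 6719, 6733, 6737, 6761, 6763, 6779, 6781, 6791, 6793, 6803, 6823, 6827, 6829, 6833, 6841, 6857, 6863, 6869, 6871, 6883, 6899, 6907, 6911, 6917]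

def L16 : List ℕ := [6947, 6949, 6959, 6961, 6967, 6971, 6977, 6983, 6991, 6997, 7001, 7013, 7019, 7027, 7039, 7043, 7057, 7069, 7079, 7103, 7109, 7121, 7127, 7129, 7151, 7159, 7177, 7187, 7193, 7207, 7211, 7213, 7219, 7229, 7237, 7243, 7247, 7253, 7283, 7297, 7307, 7309, 7321, 7331, 7333, 7349, 7351, 7369, 7393, 7411, 7417, 7433, 7451, 7457, 7459, 7477, 7481, 7487, 7489, 7499, 7507, 7517, 7523, 7529, 7537, 7541, 7547, 7549, 7559, 7561, 7573, 7577, 7583, 7589, 7591, 7603, 7607, 7621, 7639, 7643, 7649, 7669, 7673, 7681, 7687, 7691, 7699, 7703, 7717, 7723, 7727, 7741, 7753, 7757, 7759, 7789, 7793, 7817, 7823, 7829, 7841, 7853, 7867, 7873, 7877, 7879, 7883, 7901, 7907, 7919, 7927, 7933, 7937, 7949, 7951, 7963, 7993, 8009, 8011, 8017]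

def L17 : List ℕ := [8039, 8053, 8059, 8069, 8081, 8087, 8089, 8093, 8101, 8111, 8117, 8123, 8147, 8161, 8167, 8171, 8179, 8191, 8209, 8219, 8221, 8231, 8233, 8237, 8243, 8263, 8269, 8273, 8287, 8291, 8293, 8297, 8311, 8317, 8329, 8353, 8363, 8369, 8377, 8387, 8389, 8419, 8423, 8429, 8431, 8443, 8447, 8461]

set_option maxHeartbeats 10000000 in
lemma main_small (m : ℕ) (hm : 11 ≤ m) (hmu : m < 8464) :
    ((m:ℝ)+1)/2 ≤ Real.log (primorial m) := by
  have c0 : 2^11 ≤ primorial 11 := by decide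
  have hp0 : ∀ p ∈ L0, Nat.Prime p := by
    simp (config := { maxSteps := 10000000 }) only [L0, List.forall_mem_cons, List.forall_mem_nil, and_true]
    norm_num
  have c1 : 2^14 ≤ primorial 15 := by
    calc (2:ℕ)^14 = 2^11 * 2^3 := by rw [← pow_add]
      _ ≤ 2^11 * L0.prod := Nat.mul_le_mul (le_refl _) (by norm_num [L0])
      _ ≤ primorial 11 * L0.prod := Nat.mul_le_mul c0 (le_refl _)
      _ ≤ primorial 15 := primorial_step 11 15 L0 (by norm_num) hp0 (by decide) (by decide)
  have hp1 : ∀ p ∈ L1, Nat.Prime p := by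
    simp (config := { maxSteps := 10000000 }) only [L1, List.forall_mem_cons, List.forall_mem_nil, and_true]
    norm_num
  have c2 : 2^22 ≤ primorial 19 := by
    calc (2:ℕ)^22 = 2^14 * 2^8 := by rw [← pow_add]
      _ ≤ 2^14 * L1.prod := Nat.mul_le_mul (le_refl _) (by norm_num [L1])
      _ ≤ primorial 15 * L1.prod := Nat.mul_le_mul c1 (le_refl _)
      _ ≤ primorial 19 := primorial_step 15 19 L1 (by norm_num) hp1 (by decide) (by decide)
  have hp2 : ∀ p ∈ L2, Nat.Prime p := by
    simp (config := { maxSteps := 10000000 }) only [L2, List.forall_mem_cons, List.forall_mem_nil, and_true]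
    norm_num
  have c3 : 2^31 ≤ primorial 30 := by
    calc (2:ℕ)^31 = 2^22 * 2^9 := by rw [← pow_add]
      _ ≤ 2^22 * L2.prod := Nat.mul_le_mul (le_refl _) (by norm_num [L2])
      _ ≤ primorial 19 * L2.prod := Nat.mul_le_mul c2 (le_refl _)
      _ ≤ primorial 30 := primorial_step 19 30 L2 (by norm_num) hp2 (by decide) (by decide)
  have hp3 : ∀ p ∈ L3, Nat.Prime p := by
    simp (config := { maxSteps := 10000000 }) only [L3, List.forall_mem_cons, List.forall_mem_nil, and_true]
    norm_num
  have c4 : 2^46 ≤ primorial 42 := by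
    calc (2:ℕ)^46 = 2^31 * 2^15 := by rw [← pow_add]
      _ ≤ 2^31 * L3.prod := Nat.mul_le_mul (le_refl _) (by norm_num [L3])
      _ ≤ primorial 30 * L3.prod := Nat.mul_le_mul c3 (le_refl _)
      _ ≤ primorial 42 := primorial_step 30 42 L3 (by norm_num) hp3 (by decide) (by decide)
  have hp4 : ∀ p ∈ L4, Nat.Prime p := by
    simp (config := { maxSteps := 10000000 }) only [L4, List.forall_mem_cons, List.forall_mem_nil, and_true]
    norm_num
  have c5 : 2^74 ≤ primorial 63 := by
    calc (2:ℕ)^74 = 2^46 * 2^28 := by rw [← pow_add]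
      _ ≤ 2^46 * L4.prod := Nat.mul_le_mul (le_refl _) (by norm_num [L4])
      _ ≤ primorial 42 * L4.prod := Nat.mul_le_mul c4 (le_refl _)
      _ ≤ primorial 63 := primorial_step 42 63 L4 (by norm_num) hp4 (by decide) (by decide)
  have hp5 : ∀ p ∈ L5, Nat.Prime p := by
    simp (config := { maxSteps := 10000000 }) only [L5, List.forall_mem_cons, List.forall_mem_nil, and_true]
    norm_num
  have c6 : 2^124 ≤ primorial 102 := by
    calc (2:ℕ)^124 = 2^74 * 2^50 := by rw [← pow_add]
      _ ≤ 2^74 * L5.prod := Nat.mul_le_mul (le_refl _) (by norm_num [L5])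
      _ ≤ primorial 63 * L5.prod := Nat.mul_le_mul c5 (le_refl _)
      _ ≤ primorial 102 := primorial_step 63 102 L5 (by norm_num) hp5 (by decide) (by decide)
  have hp6 : ∀ p ∈ L6, Nat.Prime p := by
    simp (config := { maxSteps := 10000000 }) only [L6, List.forall_mem_cons, List.forall_mem_nil, and_true]
    norm_num
  have c7 : 2^215 ≤ primorial 171 := by
    calc (2:ℕ)^215 = 2^124 * 2^91 := by rw [← pow_add]
      _ ≤ 2^124 * L6.prod := Nat.mul_le_mul (le_refl _) (by norm_num [L6])
      _ ≤ primorial 102 * L6.prod := Nat.mul_le_mul c6 (le_refl _)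
      _ ≤ primorial 171 := primorial_step 102 171 L6 (by norm_num) hp6 (by decide) (by decide)
  have hp7 : ∀ p ∈ L7, Nat.Prime p := by
    simp (config := { maxSteps := 10000000 }) only [L7, List.forall_mem_cons, List.forall_mem_nil, and_true]
    norm_num
  have c8 : 2^395 ≤ primorial 298 := by
    calc (2:ℕ)^395 = 2^215 * 2^180 := by rw [← pow_add]
      _ ≤ 2^215 * L7.prod := Nat.mul_le_mul (le_refl _) (by norm_num [L7])
      _ ≤ primorial 171 * L7.prod := Nat.mul_le_mul c7 (le_refl _)
      _ ≤ primorial 298 := primorial_step 171 298 L7 (by norm_num) hp7 (by decide) (by decide)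
  have hp8 : ∀ p ∈ L8, Nat.Prime p := by
    simp (config := { maxSteps := 10000000 }) only [L8, List.forall_mem_cons, List.forall_mem_nil, and_true]
    norm_num
  have c9 : 2^734 ≤ primorial 547 := by
    calc (2:ℕ)^734 = 2^395 * 2^339 := by rw [← pow_add]
      _ ≤ 2^395 * L8.prod := Nat.mul_le_mul (le_refl _) (by norm_num [L8]; decide +kernel)
      _ ≤ primorial 298 * L8.prod := Nat.mul_le_mul c8 (le_refl _)
      _ ≤ primorial 547 := primorial_step 298 547 L8 (by norm_num) hp8 (by decide) (by decide)
  have hp9 : ∀ p ∈ L9, Nat.Prime p := by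
    simp (config := { maxSteps := 10000000 }) only [L9, List.forall_mem_cons, List.forall_mem_nil, and_true]
    norm_num
  have c10 : 2^1394 ≤ primorial 1017 := by
    calc (2:ℕ)^1394 = 2^734 * 2^660 := by rw [← pow_add]
      _ ≤ 2^734 * L9.prod := Nat.mul_le_mul (le_refl _) (by norm_num [L9]; decide +kernel)
      _ ≤ primorial 547 * L9.prod := Nat.mul_le_mul c9 (le_refl _)
      _ ≤ primorial 1017 := primorial_step 547 1017 L9 (by norm_num) hp9 (by decide) (by decide)
  have hp10 : ∀ p ∈ L10, Nat.Prime p := by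
    simp (config := { maxSteps := 10000000 }) only [L10, List.forall_mem_cons, List.forall_mem_nil, and_true]
    norm_num
  have c11 : 2^2650 ≤ primorial 1889 := by
    calc (2:ℕ)^2650 = 2^1394 * 2^1256 := by rw [← pow_add]
      _ ≤ 2^1394 * L10.prod := Nat.mul_le_mul (le_refl _) (by norm_num [L10]; decide +kernel)
      _ ≤ primorial 1017 * L10.prod := Nat.mul_le_mul c10 (le_refl _)
      _ ≤ primorial 1889 := primorial_step 1017 1889 L10 (by norm_num) hp10 (by decide) (by decide)
  have hp11 : ∀ p ∈ L11, Nat.Prime p := by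
    simp (config := { maxSteps := 10000000 }) only [L11, List.forall_mem_cons, List.forall_mem_nil, and_true]
    norm_num
  have c12 : 2^3993 ≤ primorial 2819 := by
    calc (2:ℕ)^3993 = 2^2650 * 2^1343 := by rw [← pow_add]
      _ ≤ 2^2650 * L11.prod := Nat.mul_le_mul (le_refl _) (by norm_num [L11]; decide +kernel)
      _ ≤ primorial 1889 * L11.prod := Nat.mul_le_mul c11 (le_refl _)
      _ ≤ primorial 2819 := primorial_step 1889 2819 L11 (by norm_num) hp11 (by decide) (by decide)
  have hp12 : ∀ p ∈ L12, Nat.Prime p := by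
    simp (config := { maxSteps := 10000000 }) only [L12, List.forall_mem_cons, List.forall_mem_nil, and_true]
    norm_num
  have c13 : 2^5396 ≤ primorial 3821 := by
    calc (2:ℕ)^5396 = 2^3993 * 2^1403 := by rw [← pow_add]
      _ ≤ 2^3993 * L12.prod := Nat.mul_le_mul (le_refl _) (by norm_num [L12]; decide +kernel)
      _ ≤ primorial 2819 * L12.prod := Nat.mul_le_mul c12 (le_refl _)
      _ ≤ primorial 3821 := primorial_step 2819 3821 L12 (by norm_num) hp12 (by decide) (by decide)
  have hp13 : ∀ p ∈ L13, Nat.Prime p := by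
    simp (config := { maxSteps := 10000000 }) only [L13, List.forall_mem_cons, List.forall_mem_nil, and_true]
    norm_num
  have c14 : 2^6844 ≤ primorial 4831 := by
    calc (2:ℕ)^6844 = 2^5396 * 2^1448 := by rw [← pow_add]
      _ ≤ 2^5396 * L13.prod := Nat.mul_le_mul (le_refl _) (by norm_num [L13]; decide +kernel)
      _ ≤ primorial 3821 * L13.prod := Nat.mul_le_mul c13 (le_refl _)
      _ ≤ primorial 4831 := primorial_step 3821 4831 L13 (by norm_num) hp13 (by decide) (by decide)
  have hp14 : ∀ p ∈ L14, Nat.Prime p := by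
    simp (config := { maxSteps := 10000000 }) only [L14, List.forall_mem_cons, List.forall_mem_nil, and_true]
    norm_num
  have c15 : 2^8330 ≤ primorial 5857 := by
    calc (2:ℕ)^8330 = 2^6844 * 2^1486 := by rw [← pow_add]
      _ ≤ 2^6844 * L14.prod := Nat.mul_le_mul (le_refl _) (by norm_num [L14]; decide +kernel)
      _ ≤ primorial 4831 * L14.prod := Nat.mul_le_mul c14 (le_refl _)
      _ ≤ primorial 5857 := primorial_step 4831 5857 L14 (by norm_num) hp14 (by decide) (by decide)
  have hp15 : ∀ p ∈ L15, Nat.Prime p := by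
    simp (config := { maxSteps := 10000000 }) only [L15, List.forall_mem_cons, List.forall_mem_nil, and_true]
    norm_num
  have c16 : 2^9847 ≤ primorial 6917 := by
    calc (2:ℕ)^9847 = 2^8330 * 2^1517 := by rw [← pow_add]
      _ ≤ 2^8330 * L15.prod := Nat.mul_le_mul (le_refl _) (by norm_num [L15]; decide +kernel)
      _ ≤ primorial 5857 * L15.prod := Nat.mul_le_mul c15 (le_refl _)
      _ ≤ primorial 6917 := primorial_step 5857 6917 L15 (by norm_num) hp15 (by decide) (by decide)
  have hp16 : ∀ p ∈ L16, Nat.Prime p := by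
    simp (config := { maxSteps := 10000000 }) only [L16, List.forall_mem_cons, List.forall_mem_nil, and_true]
    norm_num
  have c17 : 2^11390 ≤ primorial 8017 := by
    calc (2:ℕ)^11390 = 2^9847 * 2^1543 := by rw [← pow_add]
      _ ≤ 2^9847 * L16.prod := Nat.mul_le_mul (le_refl _) (by norm_num [L16]; decide +kernel)
      _ ≤ primorial 6917 * L16.prod := Nat.mul_le_mul c16 (le_refl _)
      _ ≤ primorial 8017 := primorial_step 6917 8017 L16 (by norm_num) hp16 (by decide) (by decide)
  have hp17 : ∀ p ∈ L17, Nat.Prime p := by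
    simp (config := { maxSteps := 10000000 }) only [L17, List.forall_mem_cons, List.forall_mem_nil, and_true]
    norm_num
  have c18 : 2^12014 ≤ primorial 8464 := by
    calc (2:ℕ)^12014 = 2^11390 * 2^624 := by rw [← pow_add]
      _ ≤ 2^11390 * L17.prod := Nat.mul_le_mul (le_refl _) (by norm_num [L17]; decide +kernel)
      _ ≤ primorial 8017 * L17.prod := Nat.mul_le_mul c17 (le_refl _)
      _ ≤ primorial 8464 := primorial_step 8017 8464 L17 (by norm_num) hp17 (by decide) (by decide)
  rcases Nat.lt_or_ge m 15 with h0 | h0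
  · exact cpcover 11 11 15 m c0 hm h0 (by norm_num)
  rcases Nat.lt_or_ge m 19 with h1 | h1
  · exact cpcover 15 14 19 m c1 h0 h1 (by norm_num)
  rcases Nat.lt_or_ge m 30 with h2 | h2
  · exact cpcover 19 22 30 m c2 h1 h2 (by norm_num)
  rcases Nat.lt_or_ge m 42 with h3 | h3
  · exact cpcover 30 31 42 m c3 h2 h3 (by norm_num)
  rcases Nat.lt_or_ge m 63 with h4 | h4
  · exact cpcover 42 46 63 m c4 h3 h4 (by norm_num)
  rcases Nat.lt_or_ge m 102 with h5 | h5
  · exact cpcover 63 74 102 m c5 h4 h5 (by norm_num)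
  rcases Nat.lt_or_ge m 171 with h6 | h6
  · exact cpcover 102 124 171 m c6 h5 h6 (by norm_num)
  rcases Nat.lt_or_ge m 298 with h7 | h7
  · exact cpcover 171 215 298 m c7 h6 h7 (by norm_num)
  rcases Nat.lt_or_ge m 547 with h8 | h8
  · exact cpcover 298 395 547 m c8 h7 h8 (by norm_num)
  rcases Nat.lt_or_ge m 1017 with h9 | h9
  · exact cpcover 547 734 1017 m c9 h8 h9 (by norm_num)
  rcases Nat.lt_or_ge m 1889 with h10 | h10
  · exact cpcover 1017 1394 1889 m c10 h9 h10 (by norm_num)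
  rcases Nat.lt_or_ge m 2819 with h11 | h11
  · exact cpcover 1889 2650 2819 m c11 h10 h11 (by norm_num)
  rcases Nat.lt_or_ge m 3821 with h12 | h12
  · exact cpcover 2819 3993 3821 m c12 h11 h12 (by norm_num)
  rcases Nat.lt_or_ge m 4831 with h13 | h13
  · exact cpcover 3821 5396 4831 m c13 h12 h13 (by norm_num)
  rcases Nat.lt_or_ge m 5857 with h14 | h14
  · exact cpcover 4831 6844 5857 m c14 h13 h14 (by norm_num)
  rcases Nat.lt_or_ge m 6917 with h15 | h15
  · exact cpcover 5857 8330 6917 m c15 h14 h15 (by norm_num)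
  rcases Nat.lt_or_ge m 8017 with h16 | h16
  · exact cpcover 6917 9847 8017 m c16 h15 h16 (by norm_num)
  rcases Nat.lt_or_ge m 8464 with h17 | h17
  · exact cpcover 8017 11390 8464 m c17 h16 h17 (by norm_num)
  omega

lemma main_nat (m : ℕ) (hm : 11 ≤ m) : ((m:ℝ)+1)/2 ≤ Real.log (primorial m) := by
  rcases Nat.lt_or_ge m 8464 with hs | hb
  · exact main_small m hm hs
  · set n := m/2 with hn
    have hn4232 : 4232 ≤ n := by omega
    have h2nm : 2*n ≤ m := by omega
    have hm2n : m ≤ 2*n+1 := by omega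
    have h := theta_big n hn4232
    have hmono : ((primorial (2*n) : ℕ):ℝ) ≤ ((primorial m : ℕ):ℝ) := by
      exact_mod_cast primorial_mono h2nm
    have hppos : (0:ℝ) < ((primorial (2*n) : ℕ):ℝ) := by
      exact_mod_cast primorial_pos (2*n)
    have hlog : Real.log (primorial (2*n)) ≤ Real.log (primorial m) :=
      Real.log_le_log hppos hmono
    have hc : (m:ℝ) ≤ 2*(n:ℝ)+1 := by exact_mod_cast hm2n
    linarith

theorem stmt_7 (x : ℝ) (hx : 11 ≤ x) :
    Real.log (∏ p ∈ Finset.filter Nat.Prime (Finset.range (⌊x⌋₊ + 1)), (p : ℝ)) > x / 2 := by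
  have hm11 : 11 ≤ ⌊x⌋₊ := Nat.le_floor (by exact_mod_cast hx)
  have hxlt : x < (⌊x⌋₊:ℝ) + 1 := Nat.lt_floor_add_one x
  have key := main_nat ⌊x⌋₊ hm11
  have hcast : (∏ p ∈ Finset.filter Nat.Prime (Finset.range (⌊x⌋₊ + 1)), (p:ℝ))
      = ((primorial ⌊x⌋₊ : ℕ) : ℝ) := by
    rw [primorial, Nat.cast_prod]
  rw [hcast]
  linarith
end

section
/- Let p be prime with p ≡ 3 (mod 4) and p ≤ 2^(j-1), and let D_j = 2^(j-1)# · ∏_{i=0}^{j-1} (2^(j-1-i)#_{3:4})^(2^i). Then ν_p(D_j) = 1 + ∑_{i=0}^{j-1-⌈log_2 p⌉} 2^i = 2^(j - ⌈log_2 p⌉). If instead p ≤ 2^(j-1) and p ≢ 3 (mod 4), then ν_p(D_j) = 1. -/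
/-- The primorial `m#`: the product of all primes `p ≤ m`. -/
def primor (m : ℕ) : ℕ := ∏ p ∈ Finset.filter Nat.Prime (Finset.range (m + 1)), p

/-- `m#_{3:4}`: the product of all primes `p ≤ m` with `p ≡ 3 (mod 4)`. -/
def primor34 (m : ℕ) : ℕ :=
  ∏ p ∈ Finset.filter (fun p => Nat.Prime p ∧ p % 4 = 3) (Finset.range (m + 1)), p

def Dco (j : ℕ) : ℕ :=
  primor (2 ^ (j - 1)) * ∏ i ∈ Finset.range j, (primor34 (2 ^ (j - 1 - i))) ^ 2 ^ i

lemma padicValNat_finset_prod (p : ℕ) [Fact p.Prime] (S : Finset ℕ) (f : ℕ → ℕ)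
    (hf : ∀ q ∈ S, f q ≠ 0) :
    padicValNat p (∏ q ∈ S, f q) = ∑ q ∈ S, padicValNat p (f q) := by
  classical
  induction S using Finset.induction with
  | empty => simp
  | @insert a s ha ih =>
    rw [Finset.prod_insert ha, padicValNat.mul (hf a (Finset.mem_insert_self a s))
      (Finset.prod_ne_zero_iff.mpr fun q hq => hf q (Finset.mem_insert_of_mem hq)),
      Finset.sum_insert ha, ih fun q hq => hf q (Finset.mem_insert_of_mem hq)]

lemma val_prime_prod (p : ℕ) (hp : p.Prime) (S : Finset ℕ) (hS : ∀ q ∈ S, q.Prime) :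
    padicValNat p (∏ q ∈ S, q) = if p ∈ S then 1 else 0 := by
  haveI : Fact p.Prime := ⟨hp⟩
  rw [padicValNat_finset_prod p S (fun q => q) fun q hq => (hS q hq).ne_zero]
  have h : ∀ q ∈ S, padicValNat p q = if q = p then 1 else 0 := by
    intro q hq
    by_cases hqp : q = p
    · subst hqp; simp [padicValNat.self hp.one_lt]
    · rw [if_neg hqp]
      exact padicValNat.eq_zero_of_not_dvd
        (fun hd => hqp ((Nat.prime_dvd_prime_iff_eq hp (hS q hq)).mp hd).symm)
  rw [Finset.sum_congr rfl h, Finset.sum_ite_eq' S p]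

lemma val_primor (p m : ℕ) (hp : p.Prime) :
    padicValNat p (primor m) = if p ≤ m then 1 else 0 := by
  haveI : Fact p.Prime := ⟨hp⟩
  rw [primor, val_prime_prod p hp _ (fun q hq => (Finset.mem_filter.mp hq).2)]
  simp only [Finset.mem_filter, Finset.mem_range, Nat.lt_succ_iff]
  by_cases h : p ≤ m <;> simp [h, hp]

lemma val_primor34 (p m : ℕ) (hp : p.Prime) :
    padicValNat p (primor34 m) = if p ≤ m ∧ p % 4 = 3 then 1 else 0 := by
  haveI : Fact p.Prime := ⟨hp⟩
  rw [primor34, val_prime_prod p hp _ (fun q hq => (Finset.mem_filter.mp hq).2.1)]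
  simp only [Finset.mem_filter, Finset.mem_range, Nat.lt_succ_iff]
  by_cases h : p ≤ m <;> by_cases h3 : p % 4 = 3 <;> simp [h, h3, hp]

lemma primor_pos (m : ℕ) : 0 < primor m :=
  Finset.prod_pos fun q hq => (Finset.mem_filter.mp hq).2.pos

lemma primor34_pos (m : ℕ) : 0 < primor34 m :=
  Finset.prod_pos fun q hq => (Finset.mem_filter.mp hq).2.1.pos

lemma one_add_geom (n : ℕ) : 1 + ∑ i ∈ Finset.range n, 2 ^ i = 2 ^ n := by
  induction n with
  | zero => simp
  | succ n ih => rw [Finset.sum_range_succ, ← Nat.add_assoc, ih]; ring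

theorem stmt_13 (p j : ℕ) (hp : p.Prime) (hple : p ≤ 2 ^ (j - 1)) :
    (p % 4 = 3 →
      padicValNat p (Dco j) = 1 + ∑ i ∈ Finset.range (j - Nat.clog 2 p), 2 ^ i ∧
      padicValNat p (Dco j) = 2 ^ (j - Nat.clog 2 p)) ∧
    (p % 4 ≠ 3 → padicValNat p (Dco j) = 1) := by
  haveI : Fact p.Prime := ⟨hp⟩
  have hp2 := hp.two_le
  have hj : 1 ≤ j := by
    rcases Nat.eq_zero_or_pos j with h | h
    · subst h; simp at hple; omega
    · exact h
  have hclog : Nat.clog 2 p ≤ j - 1 := (Nat.clog_le_iff_le_pow one_lt_two).mpr hple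
  have hval : padicValNat p (Dco j) =
      1 + ∑ i ∈ Finset.range j, 2 ^ i *
        (if p ≤ 2 ^ (j - 1 - i) ∧ p % 4 = 3 then 1 else 0) := by
    rw [Dco, padicValNat.mul (primor_pos _).ne'
      (Finset.prod_ne_zero_iff.mpr fun i _ => pow_ne_zero _ (primor34_pos _).ne'),
      padicValNat_finset_prod p _ _ (fun i _ => pow_ne_zero _ (primor34_pos _).ne'),
      val_primor p _ hp, if_pos hple]
    congr 1
    refine Finset.sum_congr rfl fun i _ => ?_
    rw [padicValNat.pow _ _, val_primor34 p _ hp]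
  have hcond : ∀ i < j, (p ≤ 2 ^ (j - 1 - i) ↔ i < j - Nat.clog 2 p) := by
    intro i hi
    rw [← Nat.clog_le_iff_le_pow one_lt_two]
    omega
  constructor
  · intro h3
    have key : padicValNat p (Dco j) = 1 + ∑ i ∈ Finset.range (j - Nat.clog 2 p), 2 ^ i := by
      rw [hval]
      congr 1
      rw [show ∑ i ∈ Finset.range j, 2 ^ i * (if p ≤ 2 ^ (j - 1 - i) ∧ p % 4 = 3 then 1 else 0)
          = ∑ i ∈ Finset.range j, (if i < j - Nat.clog 2 p then 2 ^ i else 0) from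
        Finset.sum_congr rfl fun i hi => by
          rw [Finset.mem_range] at hi
          by_cases hc : p ≤ 2 ^ (j - 1 - i)
          · simp [hc, h3, (hcond i hi).mp hc]
          · rw [if_neg (fun hlt => hc ((hcond i hi).mpr hlt))]; simp [hc],
        ← Finset.sum_filter]
      congr 1
      ext a
      simp only [Finset.mem_filter, Finset.mem_range]
      omega
    refine ⟨key, ?_⟩
    rw [key, one_add_geom]
  · intro h3
    rw [hval]
    simp [h3]
end

section
/- Let q be a prime with q ≡ 1 (mod 2^(k-1)). Then the square chain of length k over ℤ/qℤ given by c_1 = ⋯ = c_{k-2} = 0, c_{k-1} = 2⁻¹, c_k = 2⁻² (i.e. P(x) = (x^(2^(k-1)) - 2⁻¹)² - 2⁻² = (x^(2^(k-1)) - 1)·x^(2^(k-1))) splits into linear factors over ℤ/qℤ and has exactly 2^(k-1) + 1 distinct roots. -/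
open Polynomial

lemma chain_pow {D : Type*} [CommRing D] (c : ℕ → D) (j : ℕ)
    (h : ∀ i, 1 ≤ i → i ≤ j → c i = 0) : chain c j = X ^ 2 ^ j := by
  induction j with
  | zero => simp [chain]
  | succ j ih =>
    rw [chain, ih (fun i h1 h2 => h i h1 (h2.trans (Nat.le_succ j))),
      h (j+1) (Nat.succ_le_succ (Nat.zero_le j)) le_rfl, map_zero, sub_zero,
      ← pow_mul, pow_succ]

theorem stmt_18 (q k : ℕ) [Fact q.Prime] (hk : 2 ≤ k) (hq : q % 2 ^ (k - 1) = 1)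
    (c : ℕ → ZMod q)
    (hc : c = fun i => if i = k - 1 then (2 : ZMod q)⁻¹
                       else if i = k then ((2 : ZMod q)⁻¹) ^ 2 else 0) :
    ((chain c k).map (RingHom.id (ZMod q))).Splits ∧
    (chain c k).roots.toFinset.card = 2 ^ (k - 1) + 1 := by
  have hqp := (Fact.out : q.Prime)
  set n := 2 ^ (k - 1) with hn
  have hn2 : 2 ∣ n := by
    rw [hn]
    exact dvd_pow_self 2 (by omega)
  have hnpos : 0 < n := Nat.pow_pos (by norm_num)
  have hqodd : q % 2 = 1 := by
    rw [← Nat.mod_mod_of_dvd q hn2, hq]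
  have h2ne : (2 : ZMod q) ≠ 0 := by
    have : ((2 : ℕ) : ZMod q) ≠ 0 := by
      rw [Ne, ZMod.natCast_eq_zero_iff]
      intro hdvd
      have h1 := Nat.le_of_dvd two_pos hdvd
      have h2 := hqp.two_le
      omega
    simpa using this
  have h2inv : (2 : ZMod q) * (2 : ZMod q)⁻¹ = 1 := mul_inv_cancel₀ h2ne
  -- compute the chain
  have hch1 : chain c (k - 1) = X ^ n - C (2 : ZMod q)⁻¹ := by
    obtain ⟨j, hj⟩ : ∃ j, k - 1 = j + 1 := ⟨k - 2, by omega⟩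
    rw [hj, chain, chain_pow c j (by
      intro i h1 h2
      rw [hc]
      simp only
      rw [if_neg (by omega), if_neg (by omega)]), ← pow_mul, ← pow_succ, ← hj]
    congr 1
    rw [hc]
    simp
  have hchk : chain c k = X ^ n * (X ^ n - 1) := by
    have hkk : k - 1 + 1 = k := by omega
    rw [← hkk, chain, hkk, hch1]
    have hck : c k = ((2 : ZMod q)⁻¹) ^ 2 := by
      rw [hc]; simp only [if_neg (show ¬ k = k - 1 by omega), if_pos rfl, if_true]
    rw [hck]
    have h1 : (2 : Polynomial (ZMod q)) * C (2 : ZMod q)⁻¹ = 1 := by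
      rw [show (2 : Polynomial (ZMod q)) = C 2 from (map_ofNat C 2).symm, ← C_mul, h2inv, C_1]
    simp only [C_pow]
    linear_combination (-(X : Polynomial (ZMod q)) ^ n) * h1
  -- primitive root of unity
  have hdvd : n ∣ q - 1 := by
    have := Nat.div_add_mod q n
    exact ⟨q / n, by omega⟩
  have hq1pos : 0 < q - 1 := by have := hqp.two_le; omega
  obtain ⟨g, hg⟩ := IsCyclic.exists_generator (α := (ZMod q)ˣ)
  have hgord : orderOf g = q - 1 := by
    rw [orderOf_eq_card_of_forall_mem_zpowers hg, Nat.card_eq_fintype_card,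
      ZMod.card_units_eq_totient, Nat.totient_prime hqp]
  have hgprim : IsPrimitiveRoot g (q - 1) := hgord ▸ IsPrimitiveRoot.orderOf g
  obtain ⟨m, hm⟩ := hdvd
  have hζu : IsPrimitiveRoot (g ^ m) n := hgprim.pow hq1pos (by rw [hm, Nat.mul_comm])
  have hζ : IsPrimitiveRoot ((g ^ m : (ZMod q)ˣ) : ZMod q) n :=
    (IsPrimitiveRoot.coe_units_iff).mpr hζu
  -- roots of X^n - 1
  have hroots1 : (X ^ n - 1 : Polynomial (ZMod q)).roots = nthRoots n 1 := by
    rw [nthRoots, map_one]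
  have hcard1 : Multiset.card (nthRoots n (1 : ZMod q)) = n := hζ.card_nthRoots_one
  have hnd : (nthRoots n (1 : ZMod q)).Nodup := hζ.nthRoots_one_nodup
  have hdeg1 : (X ^ n - 1 : Polynomial (ZMod q)).natDegree = n := by
    rw [← C_1, natDegree_X_pow_sub_C]
  have hne1 : (X ^ n - 1 : Polynomial (ZMod q)) ≠ 0 := by
    intro h
    rw [h] at hdeg1
    simp at hdeg1
    omega
  have hsp1 : (X ^ n - 1 : Polynomial (ZMod q)).Splits := by
    rw [splits_iff_card_roots, hroots1, hcard1, hdeg1]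
  constructor
  · rw [hchk, Polynomial.map_id]
    exact (Splits.X_pow n).mul hsp1
  · rw [hchk, roots_mul (mul_ne_zero (pow_ne_zero n X_ne_zero) hne1), roots_pow, roots_X,
      Multiset.toFinset_add]
    have h0 : (n • ({0} : Multiset (ZMod q))).toFinset = {0} := by
      rw [Multiset.toFinset_nsmul _ _ (by omega)]
      rfl
    have hdisj : Disjoint ({0} : Finset (ZMod q)) (nthRoots n (1 : ZMod q)).toFinset := by
      rw [Finset.disjoint_singleton_left, Multiset.mem_toFinset, mem_nthRoots hnpos,
        zero_pow hnpos.ne']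
      exact fun h => one_ne_zero h.symm
    rw [h0, hroots1, Finset.card_union_of_disjoint hdisj, Finset.card_singleton,
      Multiset.toFinset_card_of_nodup hnd, hcard1]
    omega
end
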